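/- Let L be a finite-dimensional Lie algebra over any field F. Then N†(L) = ∩ { A + C_L(A/B) : A/B is a chief factor of L }. -/

import Mathlib

/-!
A nilpotent ideal acts nilpotently, hence trivially, on every chief factor `A/B`, and a
quasi-minimal ideal `E` either centralises an ideal `A` or lies in it (as `E = E²` and `E/Z(E)` is
minimal); this gives `N†(L) ⊆ A + C_L(A/B)`.

Conversely let `D` be the intersection, `N' = N(L) + Σ E` over the quasi-minimal `E`, and
suppose `N' < D`. Take a chief factor `A/N'` with `A ≤ D` and an ideal `C` minimal with
`C + N' = A`. An element of `D` acts centrally on every abelian chief factor, so `C` stabilises a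
chief series of `N(L)`. A quasi-minimal `E ≤ C` would force `C ≤ C_L(E/Z(E))` by minimality of
`C`, which is absurd, so `C` centralises every quasi-minimal ideal and `C` stabilises
`0 ≤ N(L) ≤ N(L) + (C ∩ N')`, where `C ∩ N'` is maximal in `C`. If `C² ≤ C ∩ N'` the series
extends to `N(L) + C` and `C` is nilpotent; otherwise `C` is perfect, so it centralises
`N(L) + (C ∩ N')`, whence `C ∩ N' = Z(C)` and `C` is quasi-minimal. Either way `C ≤ N'`,
contradicting `C + N' = A`.
-/

namespace Paper

open LieAlgebra

section AlgDefs

variable (F : Type*) [Field F] (L : Type*) [LieRing L] [LieAlgebra F L]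

/-- The nilradical of a Lie algebra: the largest nilpotent ideal (the sup of nilpotent ideals). -/
noncomputable def nilrad : LieIdeal F L :=
  sSup {I : LieIdeal F L | LieModule.IsNilpotent I I}

/-- The nilpotency class of a Lie algebra. -/
noncomputable def nilClass : ℕ := sInf {k | LieModule.lowerCentralSeries F L L k = ⊥}

/-- A Lie algebra is nilregular if the field has characteristic zero, or characteristic `p > 0`
and its nilradical has nilpotency class less than `p - 1`. -/
noncomputable def Nilregular : Prop :=
  ringChar F = 0 ∨ nilClass F (nilrad F L) < ringChar F - 1

/-- A Lie algebra is solregular if the field has characteristic zero, or characteristic `p > 0`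
and its radical has derived length less than `log₂ p`. -/
noncomputable def Solregular : Prop :=
  ringChar F = 0 ∨ 2 ^ LieAlgebra.derivedLength F (LieAlgebra.radical F L) < ringChar F

/-- Regular means nilregular or solregular. -/
noncomputable def Regular : Prop := Nilregular F L ∨ Solregular F L

end AlgDefs

section IdealDefs

variable {F : Type*} [Field F] {L : Type*} [LieRing L] [LieAlgebra F L]

/-- The centraliser `C_L(I)` of an ideal `I`, as an ideal of `L`. -/
def centralizer (I : LieIdeal F L) : LieIdeal F L where
  carrier := {x : L | ∀ y ∈ I, ⁅x, y⁆ = 0}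
  zero_mem' := by intro y hy; simp
  add_mem' := by intro a b ha hb y hy; rw [add_lie, ha y hy, hb y hy, add_zero]
  smul_mem' := by intro c x hx y hy; rw [smul_lie, hx y hy, smul_zero]
  lie_mem := by
    intro x m hm y hy
    have h1 : ⁅x, ⁅m, y⁆⁆ = (0 : L) := by rw [hm y hy, lie_zero]
    have h2 : ⁅m, ⁅x, y⁆⁆ = (0 : L) := hm _ (I.lie_mem hy)
    show ⁅⁅x, m⁆, y⁆ = (0 : L)
    rw [lie_lie, h1, h2, sub_zero]

/-- The centre `Z(I)` of an ideal `I`, as an ideal of `L`. -/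
def idealCenter (I : LieIdeal F L) : LieIdeal F L where
  carrier := {x : L | x ∈ I ∧ ∀ y ∈ I, ⁅x, y⁆ = 0}
  zero_mem' := ⟨I.zero_mem, by intro y hy; simp⟩
  add_mem' := by
    intro a b ha hb
    exact ⟨I.add_mem ha.1 hb.1, fun y hy => by rw [add_lie, ha.2 y hy, hb.2 y hy, add_zero]⟩
  smul_mem' := by
    intro c x hx
    exact ⟨I.smul_mem c hx.1, fun y hy => by rw [smul_lie, hx.2 y hy, smul_zero]⟩
  lie_mem := by
    intro x m hm
    refine ⟨I.lie_mem hm.1, fun y hy => ?_⟩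
    have h1 : ⁅x, ⁅m, y⁆⁆ = (0 : L) := by rw [hm.2 y hy, lie_zero]
    have h2 : ⁅m, ⁅x, y⁆⁆ = (0 : L) := hm.2 _ (I.lie_mem hy)
    show ⁅⁅x, m⁆, y⁆ = (0 : L)
    rw [lie_lie, h1, h2, sub_zero]

/-- The centraliser `C_L(A/B)` of a chief factor, as an ideal of `L`. -/
def chiefCentralizer (A B : LieIdeal F L) : LieIdeal F L where
  carrier := {x : L | ∀ a ∈ A, ⁅x, a⁆ ∈ B}
  zero_mem' := by intro a ha; simp [B.zero_mem]
  add_mem' := by intro x y hx hy a ha; rw [add_lie]; exact B.add_mem (hx a ha) (hy a ha)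
  smul_mem' := by intro c x hx a ha; rw [smul_lie]; exact B.smul_mem c (hx a ha)
  lie_mem := by
    intro x m hm a ha
    show ⁅⁅x, m⁆, a⁆ ∈ B
    rw [lie_lie]
    exact B.sub_mem (B.lie_mem (hm a ha)) (hm _ (A.lie_mem ha))

/-- `A/Z` is a minimal ideal of `L/Z` (via the ideal correspondence). -/
def IsMinModIdeal (Z A : LieIdeal F L) : Prop :=
  Z < A ∧ ∀ B : LieIdeal F L, Z ≤ B → B ≤ A → B = Z ∨ B = A

/-- `A` is a minimal ideal of `L`. -/
def IsMinimalIdeal (A : LieIdeal F L) : Prop := IsMinModIdeal ⊥ A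

/-- An ideal `A` of `L` is quasi-minimal if `A² = A` and `A/Z(A)` is a minimal ideal
of `L/Z(A)`. -/
def IsQuasiMinimal (A : LieIdeal F L) : Prop :=
  ⁅A, A⁆ = A ∧ IsMinModIdeal (idealCenter A) A

end IdealDefs

section MoreDefs

variable (F : Type*) [Field F] (L : Type*) [LieRing L] [LieAlgebra F L]

/-- `E†(L)`: the subalgebra generated by the quasi-minimal components of `L`. -/
noncomputable def Edagger : LieSubalgebra F L :=
  LieSubalgebra.lieSpan F L (⋃ A ∈ {A : LieIdeal F L | IsQuasiMinimal A}, (A : Set L))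

/-- `N†(L) = N(L) + E†(L)`: the quasi-minimal radical of `L`. -/
noncomputable def Ndagger : LieSubalgebra F L :=
  LieIdeal.toLieSubalgebra F L (nilrad F L) ⊔ Edagger F L

/-- The generalised nilradical `N*(L)`: the ideal containing `N = N(L)` with
`N*(L)/N` the sum of all minimal ideals of `L/N` contained in `(N + C_L(N))/N`. -/
noncomputable def Nstar : LieIdeal F L :=
  nilrad F L ⊔ sSup {A : LieIdeal F L | IsMinModIdeal (nilrad F L) A ∧
    A ≤ nilrad F L ⊔ centralizer (nilrad F L)}

/-- The Frattini ideal: the largest ideal contained in every maximal subalgebra. -/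
def frattini : LieIdeal F L :=
  sSup {I : LieIdeal F L | ∀ M : LieSubalgebra F L, IsCoatom M → (I : Set L) ⊆ M}

/-- `Ñ(L)`: the ideal with `Ñ(L)/φ(L) = Soc (L/φ(L))`. -/
noncomputable def Ntilde : LieIdeal F L :=
  frattini F L ⊔ sSup {A : LieIdeal F L | IsMinModIdeal (frattini F L) A}

/-- A characteristic ideal: one invariant under all derivations. -/
def IsCharIdeal (J : LieIdeal F L) : Prop :=
  ∀ D : LieDerivation F L L, ∀ x ∈ J, D x ∈ J

/-- The characteristic radical `R_c(L)`: the sum of all solvable characteristic ideals. -/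
noncomputable def charRadical : LieIdeal F L :=
  sSup {J : LieIdeal F L | LieAlgebra.IsSolvable J ∧ IsCharIdeal F L J}

/-- A subideal: a subalgebra joined to `L` by a chain of successive ideals. -/
def IsSubideal (S : LieSubalgebra F L) : Prop :=
  ∃ n : ℕ, ∃ c : Fin (n + 1) → LieSubalgebra F L,
    c 0 = S ∧ c (Fin.last n) = ⊤ ∧
    ∀ i : Fin n, c i.castSucc ≤ c i.succ ∧
      ∀ x ∈ c i.succ, ∀ y ∈ c i.castSucc, ⁅x, y⁆ ∈ c i.castSucc

end MoreDefs

open LieSubmodule Relation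

section LatticeFacts

variable {α : Type*} [Lattice α] [IsModularLattice α]

lemma le_of_minimal_sup_eq {N A C E K : α} (hC : Minimal (· ⊔ N = A) C) (hEN : E ≤ N)
    (hEC : E ≤ C) (hCK : C ≤ E ⊔ K) : C ≤ K := by
  have hCEK : C = E ⊔ K ⊓ C := by
    rw [← sup_inf_assoc_of_le K hEC]; exact (inf_eq_right.2 hCK).symm
  have hKC : K ⊓ C ⊔ N = A := by
    rw [← sup_eq_right.2 hEN, ← sup_assoc, sup_comm (K ⊓ C) E, ← hCEK, hC.prop]
  exact (hC.le_of_le hKC inf_le_right).trans inf_le_left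

end LatticeFacts

section Ideals

variable {F : Type*} [Field F] {L : Type*} [LieRing L] [LieAlgebra F L]

lemma isMinModIdeal_iff_covBy {Z A : LieIdeal F L} : IsMinModIdeal Z A ↔ Z ⋖ A :=
  covBy_iff_lt_and_eq_or_eq.symm

lemma le_centralizer_iff {I X : LieIdeal F L} : I ≤ centralizer X ↔ ⁅I, X⁆ = ⊥ := by
  rw [lie_eq_bot_iff]; rfl

lemma le_chiefCentralizer_iff {I A B : LieIdeal F L} : I ≤ chiefCentralizer A B ↔ ⁅I, A⁆ ≤ B := by
  rw [lie_le_iff]; rfl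

lemma idealCenter_le (I : LieIdeal F L) : idealCenter I ≤ I := fun _ hx => hx.1

lemma le_idealCenter_iff {I X : LieIdeal F L} : X ≤ idealCenter I ↔ X ≤ I ∧ ⁅I, X⁆ = ⊥ := by
  rw [lie_eq_bot_iff]
  refine ⟨fun h => ⟨h.trans (idealCenter_le I), fun y hy x hx => ?_⟩,
    fun ⟨hXI, h⟩ x hx => ⟨hXI hx, fun y hy => ?_⟩⟩
  · rw [← lie_skew, (h hx).2 y hy, neg_zero]
  · rw [← lie_skew, h y hy x hx, neg_zero]

lemma lie_idealCenter_eq_bot (I : LieIdeal F L) : ⁅I, idealCenter I⁆ = ⊥ :=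
  (le_idealCenter_iff.1 le_rfl).2

lemma lie_lie_eq_bot_of_lie_lie_eq_bot {C X : LieIdeal F L} (h : ⁅C, ⁅C, X⁆⁆ = ⊥) :
    ⁅⁅C, C⁆, X⁆ = ⊥ := by
  rw [← le_centralizer_iff, lie_le_iff]
  intro a ha b hb x hx
  have hC := (lie_eq_bot_iff _ _).1 h
  rw [lie_lie, hC a ha _ (lie_mem_lie hb hx), hC b hb _ (lie_mem_lie ha hx), sub_zero]

lemma lie_eq_bot_of_perfect {C X : LieIdeal F L} (hC : ⁅C, C⁆ = C) (h : ⁅C, ⁅C, X⁆⁆ = ⊥) :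
    ⁅C, X⁆ = ⊥ := by
  simpa only [hC] using lie_lie_eq_bot_of_lie_lie_eq_bot h

lemma IsQuasiMinimal.lie_eq_bot_or_le {E : LieIdeal F L} (hE : IsQuasiMinimal E)
    (X : LieIdeal F L) : ⁅E, X⁆ = ⊥ ∨ E ≤ X := by
  obtain ⟨hperf, hZE⟩ := hE
  rcases (isMinModIdeal_iff_covBy.1 hZE).eq_or_eq le_sup_right
      (sup_le (lie_le_left E X) (idealCenter_le E)) with h | h
  · left
    refine lie_eq_bot_of_perfect hperf (eq_bot_iff.2 ?_)
    calc ⁅E, ⁅E, X⁆⁆ ≤ ⁅E, idealCenter E⁆ := mono_lie_right E (h ▸ le_sup_left)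
      _ = ⊥ := lie_idealCenter_eq_bot E
  · right
    calc E = ⁅E, ⁅E, X⁆ ⊔ idealCenter E⁆ := by rw [h, hperf]
      _ = ⁅E, ⁅E, X⁆⁆ := by rw [lie_sup, lie_idealCenter_eq_bot, sup_bot_eq]
      _ ≤ X := (lie_le_right _ _).trans (lie_le_right _ _)

lemma IsQuasiMinimal.le_sup_chiefCentralizer {E : LieIdeal F L} (hE : IsQuasiMinimal E)
    (A B : LieIdeal F L) : E ≤ A ⊔ chiefCentralizer A B :=
  (hE.lie_eq_bot_or_le A).elim
    (fun h => le_sup_of_le_right (le_chiefCentralizer_iff.2 (h ▸ bot_le))) le_sup_of_le_left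

lemma IsQuasiMinimal.not_le_chiefCentralizer {E : LieIdeal F L} (hE : IsQuasiMinimal E) :
    ¬ E ≤ chiefCentralizer E (idealCenter E) := by
  rw [le_chiefCentralizer_iff, hE.1]
  exact hE.2.1.not_ge

lemma isQuasiMinimal_of_covBy {C Y : LieIdeal F L} (hC : ⁅C, C⁆ = C) (hYC : Y ⋖ C)
    (hY : Y ≤ idealCenter C) : IsQuasiMinimal C := by
  have hZC : idealCenter C ≠ C := fun h => by
    have hCbot : C = ⊥ := by rw [← hC]; nth_rewrite 2 [← h]; exact lie_idealCenter_eq_bot C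
    exact not_lt_bot (hCbot ▸ hYC.lt)
  obtain rfl := (hYC.eq_or_eq hY (idealCenter_le C)).resolve_right hZC
  exact ⟨hC, isMinModIdeal_iff_covBy.2 hYC⟩

end Ideals

section Nilpotent

variable {F : Type*} [Field F] {L : Type*} [LieRing L] [LieAlgebra F L]

lemma monotone_lie (I : LieIdeal F L) : Monotone fun J : LieIdeal F L => ⁅I, J⁆ :=
  fun _ _ h => mono_lie_right I h

lemma map_incl_lcs (I : LieIdeal F L) (k : ℕ) :
    (I.lcs I k).map (LieSubmodule.incl I) = (fun J => ⁅I, J⁆)^[k] I := by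
  induction k with
  | zero => simp
  | succ k ih => rw [LieIdeal.lcs_succ, map_bracket_eq, ih, Function.iterate_succ_apply']

lemma isNilpotent_iff_exists_iterate_lie_eq_bot (I : LieIdeal F L) :
    LieModule.IsNilpotent I I ↔ ∃ k, (fun J => ⁅I, J⁆)^[k] I = ⊥ := by
  have h : LieModule.IsNilpotent I I ↔ ∃ k, I.lcs I k = ⊥ := by
    rw [LieModule.isNilpotent_iff F]
    simp only [← toSubmodule_inj, LieIdeal.coe_lcs_eq]
    -- the action of `I` on itself restricted from `L` is the adjoint action, definitionally
    rfl
  have hinj := map_injective_of_injective (LieSubmodule.injective_incl I)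
  simp only [h, ← map_incl_lcs, hinj.eq_iff' (map_bot (f := LieSubmodule.incl I))]

lemma iterate_lie_sup_eq {I A B : LieIdeal F L} (hB : ⁅I, B⁆ ≤ B) (hA : ⁅I, A⁆ ⊔ B = A)
    (k : ℕ) : (fun J => ⁅I, J⁆)^[k] A ⊔ B = A := by
  induction k with
  | zero => exact sup_eq_left.2 (hA ▸ le_sup_right)
  | succ k ih =>
    rw [Function.iterate_succ_apply']
    calc ⁅I, (fun J => ⁅I, J⁆)^[k] A⁆ ⊔ B = ⁅I, (fun J => ⁅I, J⁆)^[k] A⁆ ⊔ (⁅I, B⁆ ⊔ B) := by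
          rw [sup_eq_right.2 hB]
      _ = ⁅I, (fun J => ⁅I, J⁆)^[k] A ⊔ B⁆ ⊔ B := by rw [lie_sup, sup_assoc]
      _ = A := by rw [ih, hA]

lemma le_chiefCentralizer_of_isNilpotent {I A B : LieIdeal F L} (hI : LieModule.IsNilpotent I I)
    (hBA : B ⋖ A) : I ≤ chiefCentralizer A B := by
  rw [le_chiefCentralizer_iff]
  obtain ⟨k, hk⟩ := (isNilpotent_iff_exists_iterate_lie_eq_bot I).1 hI
  rcases hBA.eq_or_eq le_sup_right (sup_le (lie_le_right A I) hBA.le) with h | h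
  · exact h ▸ le_sup_left
  · have hbot : (fun J => ⁅I, J⁆)^[k + 1] A = ⊥ := by
      rw [Function.iterate_succ_apply]
      exact eq_bot_iff.2 (hk ▸ (monotone_lie I).iterate k (lie_le_left I A))
    have hAB := iterate_lie_sup_eq (lie_le_right B I) h (k + 1)
    rw [hbot, bot_sup_eq] at hAB
    exact absurd hAB hBA.lt.ne

lemma nilrad_le_chiefCentralizer {A B : LieIdeal F L} (hBA : B ⋖ A) :
    nilrad F L ≤ chiefCentralizer A B :=
  sSup_le fun _ hI => le_chiefCentralizer_of_isNilpotent hI hBA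

end Nilpotent

section CentralChain

variable {F : Type*} [Field F] {L : Type*} [LieRing L] [LieAlgebra F L]

/-- `C` acts trivially on the factors of a series of ideals from `P` up to `X`. -/
abbrev CentralChain (C P X : LieIdeal F L) : Prop :=
  ReflTransGen (fun Y Z : LieIdeal F L => ⁅C, Z⁆ ≤ Y) P X

lemma CentralChain.lie_eq_bot_of_perfect {C X : LieIdeal F L} (hC : ⁅C, C⁆ = C)
    (h : CentralChain C ⊥ X) : ⁅C, X⁆ = ⊥ := by
  induction h with
  | refl => exact lie_bot C
  | tail _ hYZ ih =>
    exact Paper.lie_eq_bot_of_perfect hC (le_bot_iff.1 (ih ▸ mono_lie_right C hYZ))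

lemma CentralChain.isNilpotent {C X : LieIdeal F L} (h : CentralChain C ⊥ X) (hCX : C ≤ X) :
    LieModule.IsNilpotent C C := by
  have hX : ∃ k, (fun J => ⁅C, J⁆)^[k] X = ⊥ := by
    clear hCX
    induction h with
    | refl => exact ⟨0, rfl⟩
    | tail _ hYZ ih =>
      obtain ⟨k, hk⟩ := ih
      refine ⟨k + 1, ?_⟩
      rw [Function.iterate_succ_apply]
      exact le_bot_iff.1 (hk ▸ (monotone_lie C).iterate k hYZ)
  obtain ⟨k, hk⟩ := hX
  exact (isNilpotent_iff_exists_iterate_lie_eq_bot C).2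
    ⟨k, le_bot_iff.1 (hk ▸ (monotone_lie C).iterate k hCX)⟩

end CentralChain

section ChiefFactors

variable (F : Type*) [Field F] (L : Type*) [LieRing L] [LieAlgebra F L]

def chiefCentralizerInf : LieIdeal F L :=
  ⨅ (A : LieIdeal F L) (B : LieIdeal F L) (_ : B ⋖ A), A ⊔ chiefCentralizer A B

noncomputable def quasiMinimalSum : LieIdeal F L :=
  sSup {A : LieIdeal F L | IsQuasiMinimal A}

variable {F L}

lemma le_chiefCentralizerInf_iff {C : LieIdeal F L} :
    C ≤ chiefCentralizerInf F L ↔ ∀ A B : LieIdeal F L, B ⋖ A → C ≤ A ⊔ chiefCentralizer A B := by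
  simp only [chiefCentralizerInf, le_iInf_iff]

lemma coe_chiefCentralizerInf : (chiefCentralizerInf F L : Set L) =
    ⋂ (A : LieIdeal F L) (B : LieIdeal F L) (_ : IsMinModIdeal B A),
      ((A ⊔ chiefCentralizer A B : LieIdeal F L) : Set L) := by
  simp [chiefCentralizerInf, isMinModIdeal_iff_covBy]

lemma le_nilrad {I : LieIdeal F L} (hI : LieModule.IsNilpotent I I) : I ≤ nilrad F L :=
  le_sSup hI

lemma IsQuasiMinimal.le_quasiMinimalSum {E : LieIdeal F L} (hE : IsQuasiMinimal E) :
    E ≤ quasiMinimalSum F L :=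
  le_sSup hE

lemma lie_quasiMinimalSum_eq_bot {A C : LieIdeal F L} (hA : A ≤ chiefCentralizerInf F L)
    (hC : Minimal (· ⊔ (nilrad F L ⊔ quasiMinimalSum F L) = A) C) :
    ⁅C, quasiMinimalSum F L⁆ = ⊥ := by
  have hCD : C ≤ chiefCentralizerInf F L := (hC.prop ▸ le_sup_left).trans hA
  rw [lie_comm, ← le_centralizer_iff]
  refine sSup_le fun E hE => le_centralizer_iff.2 <| (hE.lie_eq_bot_or_le C).resolve_right ?_
  intro hEC
  have hEN : E ≤ nilrad F L ⊔ quasiMinimalSum F L := hE.le_quasiMinimalSum.trans le_sup_right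
  have hCE := le_chiefCentralizerInf_iff.1 hCD E _ (isMinModIdeal_iff_covBy.1 hE.2)
  exact hE.not_le_chiefCentralizer (hEC.trans (le_of_minimal_sup_eq hC hEN hEC hCE))

lemma nilrad_sup_quasiMinimalSum_le :
    nilrad F L ⊔ quasiMinimalSum F L ≤ chiefCentralizerInf F L :=
  le_chiefCentralizerInf_iff.2 fun A B hBA =>
    sup_le ((nilrad_le_chiefCentralizer hBA).trans le_sup_right)
      (sSup_le fun _ hE => hE.le_sup_chiefCentralizer A B)

lemma quasiMinimalSum_le_Edagger :
    toSubmodule (quasiMinimalSum F L) ≤ (Edagger F L).toSubmodule := by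
  rw [quasiMinimalSum, sSup_toSubmodule_eq_iSup]
  exact iSup₂_le fun E hE x hx => LieSubalgebra.subset_lieSpan (Set.mem_biUnion hE hx)

lemma coe_Ndagger :
    (Ndagger F L : Set L) = (nilrad F L ⊔ quasiMinimalSum F L : LieIdeal F L) := by
  refine le_antisymm ?_ fun x hx => ?_
  · exact (sup_le (fun x hx => le_sup_left (α := LieIdeal F L) hx) <| LieSubalgebra.lieSpan_le.2 <|
      Set.iUnion₂_subset fun E hE => (le_sSup hE).trans le_sup_right :
        Ndagger F L ≤ (nilrad F L ⊔ quasiMinimalSum F L).toLieSubalgebra)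
  · obtain ⟨y, hy, z, hz, rfl⟩ := (mem_sup _ _ x).1 hx
    exact add_mem (le_sup_left (a := (nilrad F L).toLieSubalgebra) hy)
      (le_sup_right (b := Edagger F L) (quasiMinimalSum_le_Edagger hz))

end ChiefFactors

section FiniteDimensional

variable {F : Type*} [Field F] {L : Type*} [LieRing L] [LieAlgebra F L] [FiniteDimensional F L]

instance : WellFoundedLT (LieIdeal F L) := wellFoundedLT_of_isArtinian F L L

/-- Refining `P ≤ X` to a chief series, `C` acts centrally on each factor `A/Y` because it is
abelian: `⁅A, A⁆ ≤ ⁅X, A⁆ ≤ Y`. -/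
lemma centralChain_of_le_chiefCentralizerInf {C P X : LieIdeal F L}
    (hC : C ≤ chiefCentralizerInf F L)
    (hX : ∀ A B : LieIdeal F L, B ⋖ A → X ≤ chiefCentralizer A B) (hPX : P ≤ X) :
    CentralChain C P X := by
  induction P using WellFoundedGT.induction with
  | _ P ih =>
  rcases hPX.eq_or_lt with rfl | hPX
  · exact .refl
  obtain ⟨A, hPA, hAX⟩ := exists_covBy_le_of_lt hPX
  refine .head ?_ (ih A hPA.lt hAX)
  calc ⁅C, A⁆ ≤ ⁅A ⊔ chiefCentralizer A P, A⁆ :=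
        mono_lie_left A (le_chiefCentralizerInf_iff.1 hC A P hPA)
    _ = ⁅A, A⁆ ⊔ ⁅chiefCentralizer A P, A⁆ := sup_lie _ _ _
    _ ≤ P := sup_le ((mono_lie_left A hAX).trans (le_chiefCentralizer_iff.1 (hX A P hPA)))
        (le_chiefCentralizer_iff.1 le_rfl)

lemma centralChain_bot_nilrad {C : LieIdeal F L} (hC : C ≤ chiefCentralizerInf F L) :
    CentralChain C ⊥ (nilrad F L) :=
  centralChain_of_le_chiefCentralizerInf hC (fun _ _ => nilrad_le_chiefCentralizer) bot_le

variable {A C : LieIdeal F L}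

lemma le_nilrad_sup_of_minimal (hA : nilrad F L ⊔ quasiMinimalSum F L ⋖ A)
    (hAD : A ≤ chiefCentralizerInf F L)
    (hC : Minimal (· ⊔ (nilrad F L ⊔ quasiMinimalSum F L) = A) C) :
    C ≤ nilrad F L ⊔ quasiMinimalSum F L := by
  set N := nilrad F L
  set N' := N ⊔ quasiMinimalSum F L
  have hCD : C ≤ chiefCentralizerInf F L := (hC.prop ▸ le_sup_left).trans hAD
  have hcov : N' ⊓ C ⋖ C := inf_covBy_of_covBy_sup_left (by rwa [sup_comm, hC.prop])
  have hchain : CentralChain C ⊥ (N ⊔ N' ⊓ C) := by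
    refine (centralChain_bot_nilrad hCD).tail ?_
    calc ⁅C, N ⊔ N' ⊓ C⁆ ≤ ⁅C, N'⁆ := mono_lie_right C (sup_le le_sup_left inf_le_left)
      _ = ⁅C, N⁆ := by rw [lie_sup, lie_quasiMinimalSum_eq_bot hAD hC, sup_bot_eq]
      _ ≤ N := lie_le_right N C
  rcases hcov.eq_or_eq le_sup_right (sup_le (lie_le_left C C) inf_le_right) with h | h
  · have hnil : CentralChain C ⊥ (N ⊔ C) := by
      refine hchain.tail ?_
      rw [lie_sup]
      exact sup_le_sup (lie_le_right N C) (h ▸ le_sup_left)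
    exact (le_nilrad (hnil.isNilpotent le_sup_right)).trans le_sup_left
  · have hperf : ⁅C, C⁆ = C := le_antisymm (lie_le_left C C) <|
      le_of_minimal_sup_eq hC inf_le_left inf_le_right (h.symm.le.trans (sup_comm _ _).le)
    have hZ : N' ⊓ C ≤ idealCenter C := le_idealCenter_iff.2 ⟨inf_le_right,
      le_bot_iff.1 ((mono_lie_right C le_sup_right).trans
        (hchain.lie_eq_bot_of_perfect hperf).le)⟩
    exact (isQuasiMinimal_of_covBy hperf hcov hZ).le_quasiMinimalSum.trans le_sup_right

lemma chiefCentralizerInf_le :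
    chiefCentralizerInf F L ≤ nilrad F L ⊔ quasiMinimalSum F L := by
  by_contra hD
  obtain ⟨A, hA, hAD⟩ := exists_covBy_le_of_lt (nilrad_sup_quasiMinimalSum_le.lt_of_not_ge hD)
  obtain ⟨C, -, hC⟩ := exists_minimal_le_of_wellFoundedLT
    (· ⊔ (nilrad F L ⊔ quasiMinimalSum F L) = A) A (sup_eq_left.2 hA.le)
  exact hA.lt.ne' (hC.prop.symm.trans (sup_eq_right.2 (le_nilrad_sup_of_minimal hA hAD hC)))

end FiniteDimensional

/-- `N†(L)` is the intersection of the `A + C_L(A/B)` over all chief factors `A/B` of `L`. -/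
theorem stmt_13 (F : Type*) [Field F] (L : Type*) [LieRing L] [LieAlgebra F L]
    [FiniteDimensional F L] :
    (Ndagger F L : Set L) =
      ⋂ (A : LieIdeal F L) (B : LieIdeal F L) (_ : IsMinModIdeal B A),
        ((A ⊔ chiefCentralizer A B : LieIdeal F L) : Set L) := by
  rw [coe_Ndagger, ← coe_chiefCentralizerInf,
    le_antisymm nilrad_sup_quasiMinimalSum_le chiefCentralizerInf_le]

end Paper
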